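/- For the Toom freezing majority cellular automaton F on the n×n periodic grid and a configuration x with values in {-1,+1}: if there is an R_x-path from v to w (Relation.ReflTransGen R_x v w) and w remains in state -1 at all times (F^t(x)_w = -1 for all t), then v also remains in state -1 at all times: F^t(x)_v = -1 for every t ∈ ℕ. -/
import Mathlib


/-- The Toom freezing majority cellular automaton on the `n × n` periodic grid. -/
def toom (n : ℕ) (x : ZMod n × ZMod n → ℤ) : ZMod n × ZMod n → ℤ :=
  fun u => if x u = 1 ∨ 0 < x (u.1 + 1, u.2) + x (u.1, u.2 + 1) then 1 else -1

/-- The edge relation of the digraph `G_x` associated with a configuration `x`. -/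
def toomRel (n : ℕ) (x : ZMod n × ZMod n → ℤ) (u w : ZMod n × ZMod n) : Prop :=
  x u = -1 ∧ x w = -1 ∧ (w = u + (1, 0) ∨ w = u + (0, 1))

lemma toom_vals (n : ℕ) (x : ZMod n × ZMod n → ℤ) (u : ZMod n × ZMod n) :
    toom n x u = -1 ∨ toom n x u = 1 := by
  unfold toom; split <;> simp

lemma toom_step (n : ℕ) :
    ∀ (t : ℕ) (x : ZMod n × ZMod n → ℤ), (∀ u, x u = -1 ∨ x u = 1) →
      ∀ u w : ZMod n × ZMod n, toomRel n x u w →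
      (∀ s : ℕ, (toom n)^[s] x w = -1) → (toom n)^[t] x u = -1 := by
  intro t
  induction t with
  | zero => intro x hx u w hrel hw; exact hrel.1
  | succ t ih =>
    intro x hx u w hrel hw
    obtain ⟨hu, hwx, hgeo⟩ := hrel
    have key : toom n x u = -1 := by
      unfold toom
      rw [if_neg]
      push_neg
      constructor
      · rw [hu]; norm_num
      · rcases hgeo with h | h
        · have h1 : x (u.1 + 1, u.2) = -1 := by
            have : (u.1 + 1, u.2) = u + (1, 0) := by cases u; simp [Prod.ext_iff]
            rw [this, ← h]; exact hwx
          have h2 : x (u.1, u.2 + 1) ≤ 1 := by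
            rcases hx (u.1, u.2 + 1) with h' | h' <;> rw [h'] <;> norm_num
          rw [h1]; omega
        · have h1 : x (u.1, u.2 + 1) = -1 := by
            have : (u.1, u.2 + 1) = u + (0, 1) := by cases u; simp [Prod.ext_iff]
            rw [this, ← h]; exact hwx
          have h2 : x (u.1 + 1, u.2) ≤ 1 := by
            rcases hx (u.1 + 1, u.2) with h' | h' <;> rw [h'] <;> norm_num
          rw [h1]; omega
    rw [Function.iterate_succ_apply]
    refine ih (toom n x) (toom_vals n x) u w ⟨key, ?_, hgeo⟩ ?_
    · have := hw 1; simpa using this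
    · intro s; have := hw (s + 1); rwa [Function.iterate_succ_apply] at this

theorem toom_path_to_frozen (n : ℕ) (hn : 1 ≤ n)
    (x : ZMod n × ZMod n → ℤ) (hx : ∀ u, x u = -1 ∨ x u = 1)
    (v w : ZMod n × ZMod n)
    (hpath : Relation.ReflTransGen (toomRel n x) v w)
    (hw : ∀ t : ℕ, (toom n)^[t] x w = -1) :
    ∀ t : ℕ, (toom n)^[t] x v = -1 := by
  induction hpath using Relation.ReflTransGen.head_induction_on with
  | refl => exact hw
  | head h _ ih => exact fun t => toom_step n t x hx _ _ h ih
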